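/- arXiv:2404.13995 — 3 statements merged into one kernel-verified Lean document; each statement's English description precedes it below -/
import Mathlib

section
/- Let f: (0, ∞) → ℝ be continuous, absolutely integrable on (0, ∞), and of bounded variation. Then (π/h)·Σ_{i=1}^{∞} f(iπ/h) converges to ∫₀^∞ f(q) dq as h → ∞. -/
/-! With δ = π / h, the Riemann sum is a sum over the cells (kδ, (k+1)δ] that tile (0, ∞).
Replacing `f` on a cell by its value at the right endpoint costs at most δ times the
variation of `f` on that cell, and these variations add up to at most the total variation
of `f` on (0, ∞). Hence the Riemann sum lies within δ · Var f of the integral. -/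

open Real MeasureTheory Set Filter Topology
open scoped ENNReal

theorem eVariationOn_sum_range_Ioc_le {α E : Type*} [LinearOrder α] [PseudoEMetricSpace E]
    (f : α → E) {x : ℕ → α} (hx : Monotone x) (n : ℕ) :
    ∑ k ∈ Finset.range n, eVariationOn f (Ioc (x k) (x (k + 1)))
      ≤ eVariationOn f (Ioc (x 0) (x n)) := by
  induction n with
  | zero => simp
  | succ n ih =>
    rw [Finset.sum_range_succ, ← Ioc_union_Ioc_eq_Ioc (hx (Nat.zero_le n)) (hx n.le_succ)]
    calc _ ≤ eVariationOn f (Ioc (x 0) (x n)) + eVariationOn f (Ioc (x n) (x (n + 1))) := by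
          gcongr
      _ ≤ _ := eVariationOn.add_le_union f fun a ha b hb => ha.2.trans hb.1.le

theorem tsum_eVariationOn_Ioc_le {α E : Type*} [LinearOrder α] [PseudoEMetricSpace E]
    (f : α → E) {x : ℕ → α} (hx : Monotone x) :
    ∑' k, eVariationOn f (Ioc (x k) (x (k + 1))) ≤ eVariationOn f (Ioi (x 0)) :=
  ENNReal.tsum_le_of_sum_range_le fun n =>
    (eVariationOn_sum_range_Ioc_le f hx n).trans (eVariationOn.mono f Ioc_subset_Ioi_self)

theorem norm_measureReal_smul_sub_setIntegral_le {α E : Type*} [LinearOrder α]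
    [MeasurableSpace α] [NormedAddCommGroup E] [NormedSpace ℝ E] [CompleteSpace E]
    {μ : Measure α} {f : α → E} {s : Set α} {a : α} (hs : μ s < ∞)
    (hf : IntegrableOn f s μ) (hbv : BoundedVariationOn f s) (ha : a ∈ s) :
    ‖μ.real s • f a - ∫ x in s, f x ∂μ‖ ≤ μ.real s * (eVariationOn f s).toReal := by
  have hconst : IntegrableOn (fun _ => f a) s μ := integrableOn_const hs.ne
  rw [← setIntegral_const, ← integral_sub hconst hf, mul_comm]
  refine norm_setIntegral_le_of_norm_le_const hs fun x hx => ?_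
  rw [← dist_eq_norm]
  exact hbv.dist_le ha hx

theorem dist_tsum_le_of_norm_sub_le {ι E : Type*} [NormedAddCommGroup E] [CompleteSpace E]
    {a g : ι → E} {b : ι → ℝ} {I : E} (hg : HasSum g I) (hb : Summable b)
    (h : ∀ i, ‖a i - g i‖ ≤ b i) : dist (∑' i, a i) I ≤ ∑' i, b i := by
  have hsub : Summable (fun i => a i - g i) := hb.of_norm_bounded h
  have ha : ∑' i, a i = ∑' i, (a i - g i) + I := by
    rw [← hg.tsum_eq, ← hsub.tsum_add hg.summable]
    simp
  rw [ha, dist_eq_norm, add_sub_cancel_right]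
  exact tsum_of_norm_bounded hb.hasSum h

theorem dist_smul_tsum_integral_Ioi_le {E : Type*} [NormedAddCommGroup E] [NormedSpace ℝ E]
    [CompleteSpace E] {f : ℝ → E} (hf : IntegrableOn f (Ioi 0))
    (hbv : BoundedVariationOn f (Ioi 0)) {δ : ℝ} (hδ : 0 < δ) :
    dist (δ • ∑' k : ℕ, f ((k + 1) * δ)) (∫ q in Ioi 0, f q)
      ≤ δ * (eVariationOn f (Ioi 0)).toReal := by
  set x : ℕ → ℝ := fun k => k * δ
  have hx : Monotone x := fun _ _ h => mul_le_mul_of_nonneg_right (Nat.cast_le.2 h) hδ.le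
  have hx0 : x 0 = 0 := by simp [x]
  have hunion : ⋃ k, Ioc (x k) (x (k + 1)) = Ioi 0 := by
    have hunbdd : ¬BddAbove (range x) := not_bddAbove_of_tendsto_atTop
      (tendsto_natCast_atTop_atTop.atTop_mul_const hδ)
    simpa [hx0] using iUnion_Ioc_map_succ_eq_Ioi (fun k => hx (Nat.zero_le k)) hunbdd
  have hg : HasSum (fun k => ∫ q in Ioc (x k) (x (k + 1)), f q) (∫ q in Ioi 0, f q) := by
    rw [← hunion]
    exact hasSum_integral_iUnion (fun _ => measurableSet_Ioc) hx.pairwise_disjoint_on_Ioc_succ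
      (hunion ▸ hf)
  set V : ℕ → ℝ≥0∞ := fun k => eVariationOn f (Ioc (x k) (x (k + 1)))
  have hV : ∑' k, V k ≤ eVariationOn f (Ioi 0) := hx0 ▸ tsum_eVariationOn_Ioc_le f hx
  have hVfin : ∑' k, V k ≠ ∞ := ne_top_of_le_ne_top hbv hV
  have hcell_error : ∀ k : ℕ, ‖δ • f ((k + 1) * δ) - ∫ q in Ioc (x k) (x (k + 1)), f q‖
      ≤ δ * (V k).toReal := by
    intro k
    have hvol : volume.real (Ioc (x k) (x (k + 1))) = δ := by
      rw [volume_real_Ioc_of_le (hx k.le_succ)]; simp [x]; ring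
    have hsub : Ioc (x k) (x (k + 1)) ⊆ Ioi 0 :=
      hx0 ▸ Ioc_subset_Ioi_self.trans (Ioi_subset_Ioi (hx (Nat.zero_le k)))
    have hmem : (k + 1) * δ ∈ Ioc (x k) (x (k + 1)) := by
      simpa [x] using mul_lt_mul_of_pos_right (lt_add_one (k : ℝ)) hδ
    simpa only [hvol] using norm_measureReal_smul_sub_setIntegral_le measure_Ioc_lt_top
      (hf.mono_set hsub) (hbv.mono hsub) hmem
  calc dist (δ • ∑' k : ℕ, f ((k + 1) * δ)) (∫ q in Ioi 0, f q)
      ≤ ∑' k, δ * (V k).toReal := by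
        rw [← tsum_const_smul'']
        exact dist_tsum_le_of_norm_sub_le hg ((ENNReal.summable_toReal hVfin).mul_left δ)
          hcell_error
    _ = δ * (∑' k, V k).toReal := by
        rw [tsum_mul_left, ENNReal.tsum_toReal_eq fun k => ne_top_of_le_ne_top hVfin
          (ENNReal.le_tsum k)]
    _ ≤ δ * (eVariationOn f (Ioi 0)).toReal := by
        gcongr

theorem tendsto_smul_tsum_integral_Ioi {E : Type*} [NormedAddCommGroup E] [NormedSpace ℝ E]
    [CompleteSpace E] {f : ℝ → E} (hf : IntegrableOn f (Ioi 0))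
    (hbv : BoundedVariationOn f (Ioi 0)) :
    Tendsto (fun δ : ℝ => δ • ∑' k : ℕ, f ((k + 1) * δ)) (𝓝[>] 0) (𝓝 (∫ q in Ioi 0, f q)) := by
  rw [tendsto_iff_dist_tendsto_zero]
  have hbound : Tendsto (fun δ : ℝ => δ * (eVariationOn f (Ioi 0)).toReal) (𝓝[>] 0) (𝓝 0) := by
    simpa using tendsto_nhdsWithin_of_tendsto_nhds
      ((continuous_mul_const (eVariationOn f (Ioi 0)).toReal).tendsto 0)
  refine squeeze_zero' (Eventually.of_forall fun _ => dist_nonneg) ?_ hbound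
  filter_upwards [self_mem_nhdsWithin] with δ hδ
  exact dist_smul_tsum_integral_Ioi_le hf hbv hδ

theorem riemann_sum_tendsto_integral_general (f : ℝ → ℝ)
    (hint : IntegrableOn f (Set.Ioi 0))
    (hbv : BoundedVariationOn f (Set.Ioi 0)) :
    Filter.Tendsto (fun h : ℝ => (π / h) * ∑' i : ℕ, f ((i + 1) * π / h))
      Filter.atTop (nhds (∫ q in Set.Ioi (0:ℝ), f q)) := by
  have hstep : Tendsto (fun h : ℝ => π / h) atTop (𝓝[>] 0) :=
    tendsto_nhdsWithin_iff.2 ⟨tendsto_const_nhds.div_atTop tendsto_id,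
      (eventually_gt_atTop 0).mono fun h hh => div_pos pi_pos hh⟩
  simpa only [Function.comp_def, smul_eq_mul, mul_div_assoc] using
    (tendsto_smul_tsum_integral_Ioi hint hbv).comp hstep

theorem riemann_sum_tendsto_integral (f : ℝ → ℝ)
    (hcont : ContinuousOn f (Set.Ioi 0))
    (hint : IntegrableOn f (Set.Ioi 0))
    (hbv : BoundedVariationOn f (Set.Ioi 0)) :
    Filter.Tendsto (fun h : ℝ => (π / h) * ∑' i : ℕ, f ((i + 1) * π / h))
      Filter.atTop (nhds (∫ q in Set.Ioi (0:ℝ), f q)) :=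
  riemann_sum_tendsto_integral_general f hint hbv
end

section
/- Let n be a positive even integer and define the Stehfest weights V_i = (−1)^{i + n/2} · Σ_{k=⌊(i+1)/2⌋}^{min(i, n/2)} k^{n/2}·(2k)! / [ (n/2 − k)!·k!·(k−1)!·(i−k)!·(2k−i)! ] for i = 1, ..., n. Then Σ_{i=1}^{n} V_i = 0 and Σ_{i=1}^{n} V_i / i = 1. -/
/-! Write `n = 2m`. Exchanging the two summations gives
`∑ i, V i * w i = (-1)^m ∑_{k=1}^m c_k (Δ^k w)(k)` with `Δ` the forward difference and
`c_k = k^m (2k)! / ((m-k)! k! (k-1)! k!)`. For `w = 1` every `Δ^k w` with `k ≥ 1` vanishes.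
For `w x = 1/x` one has `Δ^k w x = (-1)^k k! / (x (x+1) ⋯ (x+k))`, whose value at `x = k` cancels
the factor `(2k)!/(k-1)!` of `c_k`; what is left is `(1/m!) ∑_k (-1)^(m-k) C(m,k) k^m`, the
`m`-th forward difference of `x^m`, which is `m!`. -/

open Finset

/-- Stehfest weights for an even number `n` of terms. -/
noncomputable def stehfestV (n i : ℕ) : ℝ :=
  (-1 : ℝ) ^ (i + n / 2) *
    ∑ k ∈ Finset.Icc ((i + 1) / 2) (min i (n / 2)),
      ((k : ℝ) ^ (n / 2) * (Nat.factorial (2 * k)) :) /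
        ((Nat.factorial (n / 2 - k) : ℝ) * Nat.factorial k * Nat.factorial (k - 1) *
          Nat.factorial (i - k) * Nat.factorial (2 * k - i))

open scoped Nat fwdDiff

theorem neg_one_pow_add_eq_neg_one_pow_sub {R : Type*} [Monoid R] [HasDistribNeg R] {a b : ℕ}
    (h : b ≤ a) : (-1 : R) ^ (a + b) = (-1) ^ (a - b) := by
  rw [show a + b = a - b + 2 * b by omega, pow_add, pow_mul, neg_one_sq, one_pow, mul_one]

theorem fwdDiff_iter_one_eq_sum {R : Type*} [CommRing R] (f : R → R) (k : ℕ) (x : R) :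
    Δ_[1] ^[k] f x = ∑ j ∈ range (k + 1), (-1) ^ (k - j) * (k.choose j : R) * f (x + j) := by
  simp [fwdDiff_iter_eq_sum_shift, zsmul_eq_mul]

theorem sum_neg_one_pow_mul_choose_mul_pow_self {R : Type*} [CommRing R] (m : ℕ) :
    ∑ k ∈ range (m + 1), (-1) ^ (m - k) * (m.choose k : R) * (k : R) ^ m = m ! := by
  simpa [fwdDiff_iter_one_eq_sum] using congr_fun (fwdDiff_iter_eq_factorial (R := R) (n := m)) 0

theorem fwdDiff_iter_inv {K : Type*} [Field K] [LinearOrder K] [IsStrictOrderedRing K]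
    (k : ℕ) {x : K} (hx : 0 < x) :
    Δ_[1] ^[k] (fun y : K ↦ y⁻¹) x = (-1) ^ k * k ! / (ascPochhammer K (k + 1)).eval x := by
  induction k generalizing x with
  | zero => simp
  | succ k ih =>
    have hx1 : (0 : K) < x + 1 := by linarith
    have hP := ascPochhammer_pos (k + 1) x hx
    have hP1 := ascPochhammer_pos (k + 1) (x + 1) hx1
    have hleft : (ascPochhammer K (k + 2)).eval x =
        x * (ascPochhammer K (k + 1)).eval (x + 1) := by
      rw [ascPochhammer_succ_left]; simp
    have hright : (ascPochhammer K (k + 2)).eval x =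
        (ascPochhammer K (k + 1)).eval x * (x + (k + 1)) := by
      rw [ascPochhammer_succ_eval]; push_cast; ring
    rw [Function.iterate_succ_apply', fwdDiff, ih hx1, ih hx, div_sub_div _ _ hP1.ne' hP.ne',
      div_eq_div_iff (by positivity) (ascPochhammer_pos _ x hx).ne', Nat.factorial_succ]
    push_cast
    linear_combination ((-1) ^ k * k ! * (ascPochhammer K (k + 1)).eval x) * hleft -
      ((-1) ^ k * k ! * (ascPochhammer K (k + 1)).eval (x + 1)) * hright

theorem factorial_mul_ascPochhammer_eval_self {K : Type*} [Semiring K] {k : ℕ} (hk : 0 < k) :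
    ((k - 1)! : K) * (ascPochhammer K (k + 1)).eval (k : K) = (2 * k)! := by
  rw [← ascPochhammer_eval_cast, ascPochhammer_nat_eq_ascFactorial,
    show 2 * k = k + (k + 1) - 1 by omega, ← Nat.factorial_mul_ascFactorial' k (k + 1) hk]
  push_cast; rfl

theorem fwdDiff_iter_const_of_pos {M G : Type*} [AddCommMonoid M] [AddCommGroup G] (h : M) (c : G)
    {k : ℕ} (hk : 0 < k) : Δ_[h] ^[k] (fun _ : M ↦ c) = fun _ ↦ 0 := by
  obtain ⟨j, rfl⟩ := Nat.exists_eq_add_of_lt hk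
  rw [Function.iterate_succ_apply, fwdDiff_const]
  exact Function.iterate_fixed (fwdDiff_const h 0) _

theorem sum_Icc_one_eq_sum_range_succ {M : Type*} [AddCommMonoid M] {f : ℕ → M} (h0 : f 0 = 0)
    (m : ℕ) : ∑ k ∈ Icc 1 m, f k = ∑ k ∈ range (m + 1), f k := by
  rw [Nat.range_succ_eq_Icc_zero, ← insert_Icc_add_one_left_eq_Icc m.zero_le,
    sum_insert (by simp), h0, zero_add, zero_add]

noncomputable def stehfestCoeff (m k : ℕ) : ℝ :=
  (k : ℝ) ^ m * (2 * k)! / ((m - k)! * k ! * (k - 1)! * k !)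

theorem sum_stehfestV_mul (m : ℕ) (w : ℝ → ℝ) :
    ∑ i ∈ Icc 1 (2 * m), stehfestV (2 * m) i * w i =
      (-1) ^ m * ∑ k ∈ Icc 1 m, stehfestCoeff m k * Δ_[1] ^[k] w k := by
  have hm : 2 * m / 2 = m := by omega
  simp only [stehfestV, hm, mul_sum, sum_mul]
  have hswap : ∀ i k, i ∈ Icc 1 (2 * m) ∧ k ∈ Icc ((i + 1) / 2) (min i m) ↔
      i ∈ Icc k (2 * k) ∧ k ∈ Icc 1 m := by
    intro i k; simp only [mem_Icc, le_min_iff]; omega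
  rw [sum_comm' hswap]
  refine sum_congr rfl fun k hk ↦ ?_
  rw [fwdDiff_iter_one_eq_sum, mul_sum, mul_sum, ← Ico_add_one_right_eq_Icc, sum_Ico_eq_sum_range,
    show 2 * k + 1 - k = k + 1 by omega]
  refine sum_congr rfl fun j hj ↦ ?_
  have hjk : j ≤ k := by simp only [mem_range] at hj; omega
  rw [show k + j - k = j by omega, show 2 * k - (k + j) = k - j by omega, Nat.cast_choose ℝ hjk,
    stehfestCoeff, add_comm _ m, pow_add, neg_one_pow_add_eq_neg_one_pow_sub hjk]
  push_cast
  field_simp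

theorem stehfestCoeff_mul_fwdDiff_iter_inv {m k : ℕ} (hk : 0 < k) (hkm : k ≤ m) :
    (-1) ^ m * (stehfestCoeff m k * Δ_[1] ^[k] (fun x : ℝ ↦ x⁻¹) k) =
      (-1) ^ (m - k) * m.choose k * (k : ℝ) ^ m / m ! := by
  have hP := factorial_mul_ascPochhammer_eval_self (K := ℝ) hk
  rw [fwdDiff_iter_inv k (by positivity), stehfestCoeff, Nat.cast_choose ℝ hkm,
    ← neg_one_pow_add_eq_neg_one_pow_sub hkm, pow_add]
  field_simp
  rw [← hP, mul_div_cancel_right₀ _ (ascPochhammer_pos _ _ (by positivity)).ne']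

theorem stehfest_weights_sum (n : ℕ) (hn : 0 < n) (heven : Even n) :
    (∑ i ∈ Finset.Icc 1 n, stehfestV n i = 0) ∧
    (∑ i ∈ Finset.Icc 1 n, stehfestV n i / i = 1) := by
  obtain ⟨m, rfl⟩ := heven
  rw [← two_mul] at hn ⊢
  have hm : 0 < m := by omega
  constructor
  · have h := sum_stehfestV_mul m (fun _ ↦ 1)
    simp only [mul_one] at h
    rw [h, sum_eq_zero fun k hk ↦ ?_, mul_zero]
    simp only [fwdDiff_iter_const_of_pos (1 : ℝ) (1 : ℝ) (mem_Icc.1 hk).1, mul_zero]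
  · have h := sum_stehfestV_mul m (fun x ↦ x⁻¹)
    simp only [← div_eq_mul_inv] at h
    rw [h, mul_sum, sum_congr rfl fun k hk ↦
      stehfestCoeff_mul_fwdDiff_iter_inv (mem_Icc.1 hk).1 (mem_Icc.1 hk).2,
      sum_Icc_one_eq_sum_range_succ (by simp [hm.ne']), ← sum_div,
      sum_neg_one_pow_mul_choose_mul_pow_self, div_self (by positivity)]
end

section
/- Let q > 0, μ > 0, σ > 0 and consider F(s) = R̃(s) for the single-interface reflection coefficient of a conducting half-space in cylindrical coordinates: R̃(s) = [β₂·K₀(a₂b)·K₁(a₁b) − β₁·K₀(a₁b)·K₁(a₂b)] / [β₂·I₀(a₂b)·K₁(a₁b) + β₁·K₀(a₁b)·I₁(a₂b)] with a₁ = √(q² + sμσ), a₂ = q, β₁ = a₁/μ_r, β₂ = a₂. Then every zero s of the denominator with q² + sμσ ≠ 0 satisfies Im(s) = 0 and Re(s) < −q²/(μσ). -/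
open Real MeasureTheory

/-- Modified Bessel function of the first kind, order 0, complex argument. -/
noncomputable def cBesselI0 (z : ℂ) : ℂ :=
  (1 / Real.pi : ℂ) * ∫ θ in (0:ℝ)..Real.pi, Complex.exp (z * Real.cos θ)

/-- Modified Bessel function of the first kind, order 1, complex argument. -/
noncomputable def cBesselI1 (z : ℂ) : ℂ :=
  (1 / Real.pi : ℂ) * ∫ θ in (0:ℝ)..Real.pi, Complex.exp (z * Real.cos θ) * (Real.cos θ : ℂ)

/-- Modified Bessel function of the second kind, order 0, complex argument. -/
noncomputable def cBesselK0 (z : ℂ) : ℂ :=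
  ∫ t in Set.Ioi (0:ℝ), Complex.exp (-z * Real.cosh t)

/-- Modified Bessel function of the second kind, order 1, complex argument. -/
noncomputable def cBesselK1 (z : ℂ) : ℂ :=
  ∫ t in Set.Ioi (0:ℝ), Complex.exp (-z * Real.cosh t) * (Real.cosh t : ℂ)

/-!
Let `w = (q² + sμσ)^(1/2)` be the principal root. Unless the radicand is a negative real (which
is the conclusion), `Re w > 0`. Then `K₀(wr), K₁(wr)` decay exponentially in `r`, and the Bessel
equation `K₀'' + K₀'/z - K₀ = 0` gives the Green identity
`b w K₁(wb) conj K₀(wb) = |w|² ∫_b^∞ r |K₁(wr)|² dr + w² ∫_b^∞ r |K₀(wr)|² dr`.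
Multiplying the vanishing denominator by `b w conj K₀(wb)` and using `I₀(qb), I₁(qb) > 0` yields
`|w|² P + w² Q = 0` with `P ≥ 0` and `Q > 0`; taking imaginary and then real parts contradicts
`Re w > 0`.
-/

open Set Filter Topology
open scoped Nat Complex

lemma pow_mul_exp_neg_mul_le (n : ℕ) {c y : ℝ} (hc : 0 < c) (hy : 0 ≤ y) :
    y ^ n * exp (-(c * y)) ≤ n ! / c ^ n := by
  have h := pow_div_factorial_le_exp (x := c * y) (by positivity) n
  rw [div_le_iff₀ (by positivity), mul_pow] at h
  rw [le_div_iff₀ (by positivity), exp_neg]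
  calc y ^ n * (exp (c * y))⁻¹ * c ^ n = c ^ n * y ^ n / exp (c * y) := by ring
    _ ≤ n ! := by rw [div_le_iff₀ (exp_pos _)]; linarith

lemma self_le_cosh {t : ℝ} (ht : 0 ≤ t) : t ≤ cosh t :=
  (self_le_sinh_iff.2 ht).trans (sinh_lt_cosh t).le

lemma abs_sinh_le_cosh (t : ℝ) : |sinh t| ≤ cosh t := by
  rw [abs_sinh, ← cosh_abs]
  exact (sinh_lt_cosh _).le

/-- Splitting `exp (-x cosh t)` in two halves: one absorbs `cosh t ^ n`, the other decays. -/
lemma exp_neg_mul_cosh_mul_pow_le (n : ℕ) {x t : ℝ} (hx : 0 < x) (ht : 0 ≤ t) :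
    exp (-x * cosh t) * cosh t ^ n ≤ n ! / (x / 2) ^ n * exp (-(x / 2) * t) := by
  have hsplit : exp (-x * cosh t) = exp (-(x / 2 * cosh t)) * exp (-(x / 2) * cosh t) := by
    rw [← exp_add]; ring_nf
  have hdecay : exp (-(x / 2) * cosh t) ≤ exp (-(x / 2) * t) :=
    exp_le_exp.2 (by nlinarith [self_le_cosh ht])
  calc exp (-x * cosh t) * cosh t ^ n
      = cosh t ^ n * exp (-(x / 2 * cosh t)) * exp (-(x / 2) * cosh t) := by rw [hsplit]; ring
    _ ≤ n ! / (x / 2) ^ n * exp (-(x / 2) * t) :=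
      mul_le_mul (pow_mul_exp_neg_mul_le n (half_pos hx) (cosh_pos t).le) hdecay
        (exp_pos _).le (by positivity)

lemma integrableOn_exp_neg_mul_cosh_mul_pow (n : ℕ) {x : ℝ} (hx : 0 < x) :
    IntegrableOn (fun t => exp (-x * cosh t) * cosh t ^ n) (Ioi 0) := by
  refine Integrable.mono'
    ((exp_neg_integrableOn_Ioi 0 (half_pos hx)).const_mul (n ! / (x / 2) ^ n))
    (by fun_prop : Continuous _).aestronglyMeasurable ?_
  filter_upwards [ae_restrict_mem measurableSet_Ioi] with t ht
  rw [norm_of_nonneg (by positivity)]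
  exact exp_neg_mul_cosh_mul_pow_le n hx (le_of_lt ht)

lemma norm_cexp_neg_mul_cosh_mul_pow (z : ℂ) (n : ℕ) (t : ℝ) :
    ‖cexp (-z * cosh t) * (cosh t : ℂ) ^ n‖ = exp (-z.re * cosh t) * cosh t ^ n := by
  rw [norm_mul, Complex.norm_exp, norm_pow, Complex.norm_real, norm_of_nonneg (cosh_pos t).le]
  simp [Complex.mul_re]

lemma integrableOn_cexp_neg_mul_cosh_mul_pow {z : ℂ} (hz : 0 < z.re) (n : ℕ) :
    IntegrableOn (fun t : ℝ => cexp (-z * cosh t) * (cosh t : ℂ) ^ n) (Ioi 0) := by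
  refine Integrable.mono' (integrableOn_exp_neg_mul_cosh_mul_pow n hz)
    (by fun_prop : Continuous _).aestronglyMeasurable (ae_of_all _ fun t => ?_)
  exact (norm_cexp_neg_mul_cosh_mul_pow z n t).le

noncomputable def coshExpIntegral (n : ℕ) (z : ℂ) : ℂ :=
  ∫ t in Ioi (0:ℝ), cexp (-z * cosh t) * (cosh t : ℂ) ^ n

lemma cBesselK0_eq_coshExpIntegral (z : ℂ) : cBesselK0 z = coshExpIntegral 0 z := by
  simp [cBesselK0, coshExpIntegral]

lemma cBesselK1_eq_coshExpIntegral (z : ℂ) : cBesselK1 z = coshExpIntegral 1 z := by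
  simp [cBesselK1, coshExpIntegral]

lemma hasDerivAt_coshExpIntegral {z : ℂ} (hz : 0 < z.re) (n : ℕ) :
    HasDerivAt (coshExpIntegral n) (-coshExpIntegral (n + 1) z) z := by
  have hε : 0 < z.re / 2 := half_pos hz
  have hball : ∀ w ∈ Metric.ball z (z.re / 2), z.re / 2 ≤ w.re := fun w hw => by
    have := (Complex.abs_re_le_norm (w - z)).trans (mem_ball_iff_norm.1 hw).le
    rw [Complex.sub_re, abs_le] at this
    linarith
  have h := hasDerivAt_integral_of_dominated_loc_of_deriv_le (μ := volume.restrict (Ioi 0))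
    (F := fun w t => cexp (-w * cosh t) * (cosh t : ℂ) ^ n)
    (F' := fun w t => -(cexp (-w * cosh t) * (cosh t : ℂ) ^ (n + 1)))
    (bound := fun t => exp (-(z.re / 2) * cosh t) * cosh t ^ (n + 1))
    (Metric.ball_mem_nhds z hε)
    (Eventually.of_forall fun w => (by fun_prop : Continuous _).aestronglyMeasurable)
    (integrableOn_cexp_neg_mul_cosh_mul_pow hz n)
    (by fun_prop : Continuous _).aestronglyMeasurable
    (ae_of_all _ fun t w hw => by
      rw [norm_neg, norm_cexp_neg_mul_cosh_mul_pow]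
      gcongr
      nlinarith [hball w hw, cosh_pos t])
    (integrableOn_exp_neg_mul_cosh_mul_pow (n + 1) hε)
    (ae_of_all _ fun t w _ => by
      have h := (((hasDerivAt_neg w).mul_const (cosh t : ℂ)).cexp).mul_const
        ((cosh t : ℂ) ^ n)
      exact h.congr_deriv (by ring))
  rw [integral_neg] at h
  exact h.2

lemma analyticOnNhd_coshExpIntegral (n : ℕ) :
    AnalyticOnNhd ℂ (coshExpIntegral n) {z | 0 < z.re} :=
  DifferentiableOn.analyticOnNhd
    (fun _ hz => (hasDerivAt_coshExpIntegral hz n).differentiableAt.differentiableWithinAt)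
    (isOpen_lt continuous_const Complex.continuous_re)

/-- The modified Bessel equation `K₀'' + K₀'/z = K₀`, by integrating
`(sinh t · e^{-z cosh t})'` over `(0, ∞)`. -/
lemma coshExpIntegral_two {z : ℂ} (hz : 0 < z.re) :
    coshExpIntegral 2 z = coshExpIntegral 0 z + z⁻¹ * coshExpIntegral 1 z := by
  set f : ℕ → ℝ → ℂ := fun n t => cexp (-z * cosh t) * (cosh t : ℂ) ^ n with hf
  have hfi : ∀ n, IntegrableOn (f n) (Ioi 0) := integrableOn_cexp_neg_mul_cosh_mul_pow hz
  set g : ℝ → ℂ := fun t => (sinh t : ℂ) * cexp (-z * cosh t) with hg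
  have hderiv : ∀ t, HasDerivAt g (f 1 t - z * (f 2 t - f 0 t)) t := fun t => by
    have h := (hasDerivAt_sinh t).ofReal_comp.mul
      (((hasDerivAt_cosh t).ofReal_comp.const_mul (-z)).cexp)
    have hsinh : (sinh t : ℂ) ^ 2 = (cosh t : ℂ) ^ 2 - 1 := by exact_mod_cast sinh_sq t
    refine h.congr_deriv ?_
    simp only [hf]
    linear_combination (-z * cexp (-z * cosh t)) * hsinh
  have hgi : IntegrableOn g (Ioi 0) := by
    refine Integrable.mono' (hfi 1).norm (by fun_prop : Continuous g).aestronglyMeasurable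
      (ae_of_all _ fun t => ?_)
    simp only [hg, hf, norm_mul, pow_one, Complex.norm_real]
    rw [mul_comm]
    gcongr
    exact (abs_sinh_le_cosh t).trans (le_abs_self _)
  have hi : IntegrableOn (fun t => z * (f 2 t - f 0 t)) (Ioi 0) :=
    ((hfi 2).sub (hfi 0)).const_mul z
  have hf'i : IntegrableOn (fun t => f 1 t - z * (f 2 t - f 0 t)) (Ioi 0) := (hfi 1).sub hi
  have hFTC := integral_Ioi_of_hasDerivAt_of_tendsto' (fun t _ => hderiv t) hf'i
    (tendsto_zero_of_hasDerivAt_of_integrableOn_Ioi (fun t _ => hderiv t) hf'i hgi)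
  rw [integral_sub (hfi 1) hi, integral_const_mul, integral_sub (hfi 2) (hfi 0)] at hFTC
  have hz0 : z ≠ 0 := fun h => by simp [h] at hz
  simp only [hg, sinh_zero, Complex.ofReal_zero, zero_mul, sub_zero] at hFTC
  change coshExpIntegral 1 z - z * (coshExpIntegral 2 z - coshExpIntegral 0 z) = 0 at hFTC
  field_simp
  linear_combination (-1 : ℂ) * hFTC

lemma integral_exp_neg_mul_cosh_mul_pow_pos (n : ℕ) {x : ℝ} (hx : 0 < x) :
    0 < ∫ t in Ioi (0:ℝ), exp (-x * cosh t) * cosh t ^ n := by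
  rw [setIntegral_pos_iff_support_of_nonneg_ae
    (ae_of_all _ fun t => by positivity) (integrableOn_exp_neg_mul_cosh_mul_pow n hx)]
  have hsupp : Function.support (fun t => exp (-x * cosh t) * cosh t ^ n) = univ :=
    Function.support_eq_univ fun t => by positivity
  rw [hsupp, univ_inter]
  simp

lemma coshExpIntegral_ofReal (n : ℕ) (x : ℝ) :
    coshExpIntegral n x = ((∫ t in Ioi (0:ℝ), exp (-x * cosh t) * cosh t ^ n : ℝ) : ℂ) := by
  refine (integral_congr_ae (ae_of_all _ fun t => ?_)).trans integral_complex_ofReal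
  push_cast
  ring

lemma norm_coshExpIntegral_le (n : ℕ) {z : ℂ} {x₀ : ℝ} (h0 : 0 < x₀) (hle : x₀ ≤ z.re) :
    ‖coshExpIntegral n z‖
      ≤ exp (x₀ - z.re) * ∫ t in Ioi (0:ℝ), exp (-x₀ * cosh t) * cosh t ^ n := by
  refine (norm_integral_le_integral_norm _).trans ?_
  rw [← integral_const_mul]
  refine setIntegral_mono_on ?_ ((integrableOn_exp_neg_mul_cosh_mul_pow n h0).const_mul _)
    measurableSet_Ioi fun t _ => ?_
  · exact (integrableOn_cexp_neg_mul_cosh_mul_pow (h0.trans_le hle) n).norm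
  · rw [norm_cexp_neg_mul_cosh_mul_pow, ← mul_assoc, ← exp_add]
    gcongr
    nlinarith [one_le_cosh t]

lemma integrableOn_Ioi_of_norm_le_mul_exp {E : Type*} [NormedAddCommGroup E] {g : ℝ → E}
    {b c M : ℝ} (hb : 0 ≤ b) (hc : 0 < c) (hM : 0 ≤ M)
    (hg : ContinuousOn g (Ioi b)) (hle : ∀ r > b, ‖g r‖ ≤ M * r * exp (-(2 * c * r))) :
    IntegrableOn g (Ioi b) := by
  refine Integrable.mono' ((exp_neg_integrableOn_Ioi b hc).const_mul (M / c))
    (hg.aestronglyMeasurable measurableSet_Ioi) ?_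
  filter_upwards [ae_restrict_mem measurableSet_Ioi] with r hr
  have hr0 : 0 ≤ r := hb.trans (le_of_lt hr)
  have h := pow_mul_exp_neg_mul_le 1 hc hr0
  rw [pow_one, pow_one, Nat.factorial_one, Nat.cast_one] at h
  calc ‖g r‖ ≤ M * (r * exp (-(c * r))) * exp (-(c * r)) := by
        rw [mul_assoc, mul_assoc, ← exp_add, ← mul_assoc]; convert hle r hr using 3; ring
    _ ≤ M * (1 / c) * exp (-c * r) := by rw [neg_mul]; gcongr
    _ = M / c * exp (-c * r) := by ring

section Radial

variable {w : ℂ}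

lemma hasDerivAt_coshExpIntegral_mul_ofReal (hw : 0 < w.re) (n : ℕ) {r : ℝ} (hr : 0 < r) :
    HasDerivAt (fun r : ℝ => coshExpIntegral n (w * r))
      (-(w * coshExpIntegral (n + 1) (w * r))) r := by
  have hre : 0 < (w * r).re := by simpa using mul_pos hw hr
  have hlin : HasDerivAt (fun r : ℝ => w * r) w r := by
    simpa using (Complex.ofRealCLM.hasDerivAt (x := r)).const_mul w
  refine ((hasDerivAt_coshExpIntegral hre n).comp r hlin).congr_deriv ?_
  ring

lemma continuousOn_coshExpIntegral_mul_ofReal (hw : 0 < w.re) (n : ℕ) :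
    ContinuousOn (fun r : ℝ => coshExpIntegral n (w * r)) (Ioi 0) := fun _ hr =>
  (hasDerivAt_coshExpIntegral_mul_ofReal hw n hr).continuousAt.continuousWithinAt

lemma exists_norm_coshExpIntegral_mul_ofReal_le (hw : 0 < w.re) {b : ℝ} (hb : 0 < b) (n : ℕ) :
    ∃ C, 0 ≤ C ∧ ∀ r ≥ b, ‖coshExpIntegral n (w * r)‖ ≤ C * exp (-(w.re * r)) := by
  refine ⟨exp (w.re * b) * ∫ t in Ioi (0:ℝ), exp (-(w.re * b) * cosh t) * cosh t ^ n,
    by positivity, fun r hr => ?_⟩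
  have hre : (w * r).re = w.re * r := by simp
  refine (norm_coshExpIntegral_le n (x₀ := w.re * b) (by positivity) ?_).trans_eq ?_
  · rw [hre]; gcongr
  · rw [hre, sub_eq_add_neg, exp_add]; ring

lemma continuousOn_mul_normSq_coshExpIntegral (hw : 0 < w.re) (n : ℕ) :
    ContinuousOn (fun r : ℝ => r * Complex.normSq (coshExpIntegral n (w * r))) (Ioi 0) :=
  continuousOn_id.mul
    (Complex.continuous_normSq.comp_continuousOn (continuousOn_coshExpIntegral_mul_ofReal hw n))

lemma integrableOn_mul_normSq_coshExpIntegral (hw : 0 < w.re) {b : ℝ} (hb : 0 < b) (n : ℕ) :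
    IntegrableOn (fun r : ℝ => r * Complex.normSq (coshExpIntegral n (w * r))) (Ioi b) := by
  obtain ⟨C, -, hC⟩ := exists_norm_coshExpIntegral_mul_ofReal_le hw hb n
  refine integrableOn_Ioi_of_norm_le_mul_exp hb.le hw (sq_nonneg C) ?_ fun r hr => ?_
  · exact (continuousOn_mul_normSq_coshExpIntegral hw n).mono (Ioi_subset_Ioi hb.le)
  · have hr0 : 0 ≤ r := hb.le.trans (le_of_lt hr)
    rw [Complex.normSq_eq_norm_sq, norm_mul, norm_of_nonneg hr0, norm_pow, norm_norm]
    calc r * ‖coshExpIntegral n (w * r)‖ ^ 2 ≤ r * (C * exp (-(w.re * r))) ^ 2 := by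
          gcongr; exact hC r (le_of_lt hr)
      _ = C ^ 2 * r * exp (-(2 * w.re * r)) := by
          rw [show -(2 * w.re * r) = -(w.re * r) + -(w.re * r) by ring, exp_add]; ring

lemma coshExpIntegral_green_identity (hw : 0 < w.re) {b : ℝ} (hb : 0 < b) :
    b * w * coshExpIntegral 1 (w * b) * (starRingEnd ℂ) (coshExpIntegral 0 (w * b))
      = Complex.normSq w
          * ((∫ r in Ioi b, r * Complex.normSq (coshExpIntegral 1 (w * r)) : ℝ) : ℂ)
        + w ^ 2 * ((∫ r in Ioi b, r * Complex.normSq (coshExpIntegral 0 (w * r)) : ℝ) : ℂ) := by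
  set K : ℕ → ℝ → ℂ := fun n r => coshExpIntegral n (w * r) with hK
  set A : ℕ → ℝ → ℝ := fun n r => r * Complex.normSq (K n r) with hA
  have hAi : ∀ n, IntegrableOn (fun r => (A n r : ℂ)) (Ioi b) := fun n =>
    (integrableOn_mul_normSq_coshExpIntegral hw hb n).ofReal
  set F : ℝ → ℂ := fun r => r * w * K 1 r * (starRingEnd ℂ) (K 0 r) with hF
  have hderiv : ∀ r ∈ Ici b, HasDerivAt F (-(Complex.normSq w * A 1 r + w ^ 2 * A 0 r)) r := by
    intro r hr
    have hr0 : 0 < r := hb.trans_le hr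
    have hK0 := hasDerivAt_coshExpIntegral_mul_ofReal hw 0 hr0
    have hK1 := hasDerivAt_coshExpIntegral_mul_ofReal hw 1 hr0
    have h := (((Complex.ofRealCLM.hasDerivAt (x := r)).mul_const w).mul hK1).mul
      (hK0.star (𝕜 := ℝ))
    refine h.congr_deriv ?_
    have hre : 0 < (w * r).re := by simpa using mul_pos hw hr0
    have hw0 : w ≠ 0 := fun h0 => by simp [h0] at hw
    have hr0' : (r : ℂ) ≠ 0 := Complex.ofReal_ne_zero.2 hr0.ne'
    simp only [hA, hK, Pi.mul_apply, Complex.ofRealCLM_apply, Complex.ofReal_one,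
      Complex.ofReal_mul, ← Complex.mul_conj, Complex.star_def, map_neg, map_mul, zero_add,
      one_add_one_eq_two, coshExpIntegral_two hre]
    field_simp
    ring
  have hFi : IntegrableOn F (Ioi b) := by
    have hKc : ∀ n, ContinuousOn (K n) (Ioi b) := fun n =>
      (continuousOn_coshExpIntegral_mul_ofReal hw n).mono (Ioi_subset_Ioi hb.le)
    obtain ⟨C₀, hC₀, hK₀⟩ := exists_norm_coshExpIntegral_mul_ofReal_le hw hb 0
    obtain ⟨C₁, hC₁, hK₁⟩ := exists_norm_coshExpIntegral_mul_ofReal_le hw hb 1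
    refine integrableOn_Ioi_of_norm_le_mul_exp hb.le hw (by positivity : 0 ≤ ‖w‖ * C₁ * C₀)
      (((Complex.continuous_ofReal.continuousOn.mul continuousOn_const).mul (hKc 1)).mul
        (Complex.continuous_conj.comp_continuousOn (hKc 0))) fun r hr => ?_
    have hr0 : 0 ≤ r := hb.le.trans (le_of_lt hr)
    simp only [hF, norm_mul, Complex.norm_real, norm_of_nonneg hr0, Complex.norm_conj]
    calc r * ‖w‖ * ‖K 1 r‖ * ‖K 0 r‖
        ≤ r * ‖w‖ * (C₁ * exp (-(w.re * r))) * (C₀ * exp (-(w.re * r))) := by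
          gcongr
          exacts [hK₁ r (le_of_lt hr), hK₀ r (le_of_lt hr)]
      _ = ‖w‖ * C₁ * C₀ * r * exp (-(2 * w.re * r)) := by
          rw [show -(2 * w.re * r) = -(w.re * r) + -(w.re * r) by ring, exp_add]; ring
  have hF'i : IntegrableOn (fun r => -(Complex.normSq w * (A 1 r : ℂ) + w ^ 2 * A 0 r)) (Ioi b) :=
    (((hAi 1).const_mul _).add ((hAi 0).const_mul _)).neg
  have hFTC := integral_Ioi_of_hasDerivAt_of_tendsto' hderiv hF'i
    (tendsto_zero_of_hasDerivAt_of_integrableOn_Ioi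
      (fun r hr => hderiv r (Ioi_subset_Ici_self hr)) hF'i hFi)
  rw [integral_neg, integral_add ((hAi 1).const_mul _) ((hAi 0).const_mul _), integral_const_mul,
    integral_const_mul, integral_complex_ofReal, integral_complex_ofReal] at hFTC
  linear_combination hFTC

/-- Otherwise `K₀(w r)` would vanish on the ray `r > b`, hence, by analyticity, on the whole
right half-plane, although `K₀(1) > 0`. -/
lemma integral_mul_normSq_coshExpIntegral_zero_pos (hw : 0 < w.re) {b : ℝ} (hb : 0 < b) :
    0 < ∫ r in Ioi b, r * Complex.normSq (coshExpIntegral 0 (w * r)) := by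
  have hnn : 0 ≤ᵐ[volume.restrict (Ioi b)]
      fun r : ℝ => r * Complex.normSq (coshExpIntegral 0 (w * r)) := by
    filter_upwards [ae_restrict_mem measurableSet_Ioi] with r hr
    exact mul_nonneg (hb.trans hr).le (Complex.normSq_nonneg _)
  refine (integral_nonneg_of_ae hnn).lt_of_ne fun h0 => ?_
  have hae := (integral_eq_zero_iff_of_nonneg_ae hnn
    (integrableOn_mul_normSq_coshExpIntegral hw hb 0)).1 h0.symm
  have hvanish : ∀ r ∈ Ioi b, coshExpIntegral 0 (w * r) = 0 := fun r hr => by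
    have h := Measure.eqOn_open_of_ae_eq hae isOpen_Ioi
      ((continuousOn_mul_normSq_coshExpIntegral hw 0).mono (Ioi_subset_Ioi hb.le))
      continuousOn_const hr
    simpa [(hb.trans hr).ne'] using h
  have hw0 : w ≠ 0 := fun h => by simp [h] at hw
  have hmap : Tendsto (fun r : ℝ => w * r) (𝓝[≠] (b + 1)) (𝓝[≠] (w * (b + 1 : ℝ))) :=
    tendsto_nhdsWithin_of_tendsto_nhds_of_eventually_within _
      ((continuous_const.mul Complex.continuous_ofReal).continuousAt.mono_left
        nhdsWithin_le_nhds)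
      (eventually_nhdsWithin_of_forall fun r hr => by
        simpa [hw0] using Complex.ofReal_injective.ne hr)
  have hfreq : ∃ᶠ z in 𝓝[≠] (w * (b + 1 : ℝ)), coshExpIntegral 0 z = 0 :=
    hmap.frequently ((eventually_nhdsWithin_of_eventually_nhds
      (Ioi_mem_nhds (by linarith : b < b + 1))).mono hvanish).frequently
  have hzero := (analyticOnNhd_coshExpIntegral 0).eqOn_zero_of_preconnected_of_frequently_eq_zero
    (convex_halfSpace_re_gt 0).isPreconnected
    (by simpa using mul_pos hw (by linarith : 0 < b + 1))
    hfreq (show (1 : ℂ) ∈ {z : ℂ | 0 < z.re} by simp)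
  have hpos := integral_exp_neg_mul_cosh_mul_pow_pos 0 one_pos
  rw [Pi.zero_apply, ← Complex.ofReal_one, coshExpIntegral_ofReal] at hzero
  exact hpos.ne' (Complex.ofReal_eq_zero.1 hzero)

end Radial

lemma cBesselI0_ofReal (a : ℝ) :
    cBesselI0 a = ((1 / π * ∫ θ in (0:ℝ)..π, exp (a * cos θ) : ℝ) : ℂ) := by
  rw [cBesselI0, Complex.ofReal_mul, ← intervalIntegral.integral_ofReal]
  push_cast
  rfl

lemma cBesselI1_ofReal (a : ℝ) :
    cBesselI1 a = ((1 / π * ∫ θ in (0:ℝ)..π, exp (a * cos θ) * cos θ : ℝ) : ℂ) := by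
  rw [cBesselI1, Complex.ofReal_mul, ← intervalIntegral.integral_ofReal]
  push_cast
  rfl

lemma exists_pos_cBesselI0_ofReal (a : ℝ) : ∃ v : ℝ, 0 < v ∧ cBesselI0 a = v := by
  refine ⟨_, mul_pos (by positivity) ?_, cBesselI0_ofReal a⟩
  exact intervalIntegral.intervalIntegral_pos_of_pos_on
    ((by fun_prop : Continuous fun θ => exp (a * cos θ)).intervalIntegrable _ _)
    (fun _ _ => exp_pos _) pi_pos

/-- Since `∫₀^π cos = 0`, the integral equals `∫₀^π (e^{a cos θ} - 1) cos θ`, whose integrand is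
nonnegative. -/
lemma integral_exp_mul_cos_mul_cos_pos {a : ℝ} (ha : 0 < a) :
    0 < ∫ θ in (0:ℝ)..π, exp (a * cos θ) * cos θ := by
  have hshift : ∫ θ in (0:ℝ)..π, (exp (a * cos θ) - 1) * cos θ
      = ∫ θ in (0:ℝ)..π, exp (a * cos θ) * cos θ := by
    simp_rw [sub_mul, one_mul]
    rw [intervalIntegral.integral_sub
      ((by fun_prop : Continuous fun θ => exp (a * cos θ) * cos θ).intervalIntegrable _ _)
      (continuous_cos.intervalIntegrable _ _), integral_cos, sin_pi, sin_zero, sub_zero, sub_zero]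
  rw [← hshift]
  refine intervalIntegral.integral_pos pi_pos (by fun_prop : Continuous _).continuousOn
    (fun θ _ => ?_) ⟨0, ⟨le_rfl, pi_pos.le⟩, by simpa using ha⟩
  rcases le_total 0 (cos θ) with h | h
  · exact mul_nonneg (sub_nonneg.2 (one_le_exp (by positivity))) h
  · exact mul_nonneg_of_nonpos_of_nonpos
      (sub_nonpos.2 (exp_le_one_iff.2 (mul_nonpos_of_nonneg_of_nonpos ha.le h))) h

lemma exists_pos_cBesselI1_ofReal {a : ℝ} (ha : 0 < a) : ∃ v : ℝ, 0 < v ∧ cBesselI1 a = v :=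
  ⟨_, mul_pos (by positivity) (integral_exp_mul_cos_mul_cos_pos ha), cBesselI1_ofReal a⟩

lemma normSq_mul_add_sq_mul_ne_zero {w : ℂ} (hw : 0 < w.re) {P Q : ℝ} (hP : 0 ≤ P)
    (hQ : 0 < Q) : (Complex.normSq w : ℂ) * P + w ^ 2 * Q ≠ 0 := by
  intro h
  have him := congrArg Complex.im h
  have hre := congrArg Complex.re h
  simp only [Complex.add_im, Complex.add_re, Complex.mul_im, Complex.mul_re, sq,
    Complex.ofReal_re, Complex.ofReal_im, Complex.zero_im, Complex.zero_re] at him hre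
  have hwim : w.im = 0 := by
    have : 2 * w.re * Q * w.im = 0 := by linarith
    simpa [hw.ne', hQ.ne'] using this
  rw [hwim] at hre
  nlinarith [mul_nonneg (Complex.normSq_nonneg w) hP, mul_pos (mul_pos hw hw) hQ]

lemma re_cpow_one_half_pos {z : ℂ} (hz : z ≠ 0) (harg : z.arg ≠ π) :
    0 < (z ^ (1 / 2 : ℂ)).re := by
  rw [Complex.cpow_def_of_ne_zero hz, Complex.exp_re]
  refine mul_pos (exp_pos _) (cos_pos_of_mem_Ioo ?_)
  have him : (Complex.log z * (1 / 2 : ℂ)).im = z.arg / 2 := by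
    simp [Complex.mul_im, Complex.log_im, div_eq_mul_inv]
  rw [him]
  constructor <;> linarith [Complex.neg_pi_lt_arg z, lt_of_le_of_ne (Complex.arg_le_pi z) harg]

lemma reflection_denominator_ne_zero {w : ℂ} (hw : 0 < w.re) {q b μr : ℝ} (hq : 0 < q)
    (hb : 0 < b) (hμr : 0 < μr) :
    q * cBesselI0 (q * b) * cBesselK1 (w * b) + w / μr * cBesselK0 (w * b) * cBesselI1 (q * b)
      ≠ 0 := by
  intro h
  obtain ⟨i₀, hi₀, hI₀⟩ := exists_pos_cBesselI0_ofReal (q * b)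
  obtain ⟨i₁, hi₁, hI₁⟩ := exists_pos_cBesselI1_ofReal (mul_pos hq hb)
  rw [← Complex.ofReal_mul, hI₀, hI₁, cBesselK0_eq_coshExpIntegral,
    cBesselK1_eq_coshExpIntegral] at h
  have hμr0 : (μr : ℂ) ≠ 0 := Complex.ofReal_ne_zero.2 hμr.ne'
  field_simp at h
  set K₀ := coshExpIntegral 0 (w * b)
  have hA : 0 ≤ ∫ r in Ioi b, r * Complex.normSq (coshExpIntegral 1 (w * r)) :=
    setIntegral_nonneg measurableSet_Ioi fun r hr =>
      mul_nonneg (hb.trans hr).le (Complex.normSq_nonneg _)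
  have hB := integral_mul_normSq_coshExpIntegral_zero_pos hw hb
  refine normSq_mul_add_sq_mul_ne_zero hw
    (P := q * μr * i₀ * ∫ r in Ioi b, r * Complex.normSq (coshExpIntegral 1 (w * r)))
    (Q := q * μr * i₀ * (∫ r in Ioi b, r * Complex.normSq (coshExpIntegral 0 (w * r)))
      + b * Complex.normSq K₀ * i₁) (mul_nonneg (by positivity) hA)
    (add_pos_of_pos_of_nonneg (mul_pos (by positivity) hB)
      (mul_nonneg (mul_nonneg hb.le (Complex.normSq_nonneg _)) hi₁.le)) ?_
  push_cast
  rw [← Complex.mul_conj K₀]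
  linear_combination (b * w * (starRingEnd ℂ) K₀) * h
    - (q * μr * i₀ : ℂ) * coshExpIntegral_green_identity hw hb

theorem reflection_poles_real_negative
    (q μ σ b μr : ℝ) (hq : 0 < q) (hμ : 0 < μ) (hσ : 0 < σ) (hb : 0 < b) (hμr : 0 < μr)
    (s : ℂ) (hrad : (q : ℂ) ^ 2 + s * μ * σ ≠ 0)
    (hzero :
      (q : ℂ) * cBesselI0 ((q : ℂ) * b) *
          cBesselK1 ((((q : ℂ) ^ 2 + s * μ * σ) ^ (1 / 2 : ℂ)) * b) +
        ((((q : ℂ) ^ 2 + s * μ * σ) ^ (1 / 2 : ℂ)) / μr) *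
          cBesselK0 ((((q : ℂ) ^ 2 + s * μ * σ) ^ (1 / 2 : ℂ)) * b) *
          cBesselI1 ((q : ℂ) * b) = 0) :
    s.im = 0 ∧ s.re < -q ^ 2 / (μ * σ) := by
  by_cases harg : ((q : ℂ) ^ 2 + s * μ * σ).arg = π
  · obtain ⟨hre, him⟩ := Complex.arg_eq_pi_iff.1 harg
    have hμσ := mul_pos hμ hσ
    simp only [Complex.add_re, Complex.add_im, Complex.mul_re, Complex.mul_im, sq,
      Complex.ofReal_re, Complex.ofReal_im, mul_zero, zero_mul, sub_zero, add_zero,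
      zero_add] at hre him
    refine ⟨?_, by rw [lt_div_iff₀ hμσ]; nlinarith⟩
    simpa [hμ.ne', hσ.ne', mul_assoc] using him
  · exact absurd hzero
      (reflection_denominator_ne_zero (re_cpow_one_half_pos hrad harg) hq hb hμr)
end
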